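/- arXiv:1605.04796 — 2 statements merged into one kernel-verified Lean document; each statement's English description precedes it below -/
import Mathlib

section
/- Let Z have density on (0,1) proportional to (1−z)^{-1/2} {θ+(1−θ)z}^{-1} exp(−s z), where θ ≥ 1 and s ≥ 1. Then E[Z^2] ≤ θ(1+s)(C₁/s^3 + C₂/s^{5/2}) where C₁ = (1 − 5/(2e))^{-1/2} and C₂ = 16/15. -/
/-
Write `r(z) = (1 - z)^(-1/2)`. Since `θ ≥ 1`, the factor `{θ + (1 - θ) z}⁻¹` lies in `[θ⁻¹, 1]`,
so the denominator is at least `θ⁻¹ ∫₀¹ e^{-sz} dz ≥ (θ (1 + s))⁻¹` and the numerator is at most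
`∫₀¹ z² r(z) e^{-sz} dz`. For the latter use `r ≤ 1 + z r`: the term `∫₀¹ z² e^{-sz} dz` is at most
`2 / s³`, and in the remaining `∫₀¹ z³ e^{-sz} r(z) dz` the factor `z³ e^{-sz}` is bounded both by
`(5 / (2e))^{5/2} / s^{5/2} ≤ 1 / s^{5/2}` and by `(3 / e)³ / s³`, hence by their mean, while `∫₀¹ r = 2`.
This gives the bound with the constants `2 + (3 / e)³ ≤ C₁` and `1 ≤ C₂`.
-/

open MeasureTheory Set

/-- Weight function of CCH(1, 1/2, 1, s, 1, θ) on (0,1):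
`(1-z)^(-1/2) (θ+(1-θ)z)⁻¹ exp(-s z)`. -/
noncomputable def hsW (θ s z : ℝ) : ℝ :=
  (1 - z) ^ (-(1/2) : ℝ) * (θ + (1 - θ) * z)⁻¹ * Real.exp (-s * z)

/-- `k`-th raw moment under the normalized density proportional to `hsW`. -/
noncomputable def hsE (θ s : ℝ) (k : ℕ) : ℝ :=
  (∫ z in Ioo (0:ℝ) 1, z ^ k * hsW θ s z) / (∫ z in Ioo (0:ℝ) 1, hsW θ s z)

open Real

lemma rpow_mul_exp_neg_le {x k : ℝ} (hx : 0 ≤ x) (hk : 0 < k) :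
    x ^ k * exp (-x) ≤ (k / exp 1) ^ k := by
  have hsplit : x ^ k * exp (-x) = (x * exp (-(x / k))) ^ k := by
    rw [mul_rpow hx (exp_nonneg _), ← exp_mul, neg_mul, div_mul_cancel₀ x hk.ne']
  have hbase : x * exp (-(x / k)) ≤ k / exp 1 :=
    calc x * exp (-(x / k)) = k * (x / k * exp (-(x / k))) := by field_simp
      _ ≤ k * exp (-1) := by gcongr; exact mul_exp_neg_le_exp_neg_one _
      _ = k / exp 1 := by rw [exp_neg, div_eq_mul_inv]
  rw [hsplit]
  exact rpow_le_rpow (by positivity) hbase hk.le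

lemma rpow_mul_exp_neg_mul_le {s z k : ℝ} (hs : 0 < s) (hz : 0 ≤ z) (hk : 0 < k) :
    z ^ k * exp (-(s * z)) ≤ (k / exp 1) ^ k / s ^ k := by
  rw [le_div_iff₀ (by positivity), mul_right_comm, ← mul_rpow hz hs.le, mul_comm z]
  exact rpow_mul_exp_neg_le (by positivity) hk

lemma pow_three_mul_exp_neg_mul_le {s z : ℝ} (hs : 0 < s) (hz : z ∈ Icc (0 : ℝ) 1) :
    z ^ 3 * exp (-(s * z)) ≤ (1 / s ^ ((5 : ℝ) / 2) + (3 / exp 1) ^ 3 / s ^ 3) / 2 := by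
  have h52 : z ^ 3 * exp (-(s * z)) ≤ 1 / s ^ ((5 : ℝ) / 2) :=
    calc z ^ 3 * exp (-(s * z)) ≤ z ^ ((5 : ℝ) / 2) * exp (-(s * z)) := by
          gcongr
          rw [← rpow_natCast]
          exact rpow_le_rpow_of_exponent_ge' hz.1 hz.2 (by norm_num) (by norm_num)
      _ ≤ (5 / 2 / exp 1) ^ ((5 : ℝ) / 2) / s ^ ((5 : ℝ) / 2) :=
          rpow_mul_exp_neg_mul_le hs hz.1 (by norm_num)
      _ ≤ 1 / s ^ ((5 : ℝ) / 2) := by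
          gcongr
          refine rpow_le_one (by positivity) ?_ (by norm_num)
          rw [div_le_one (exp_pos 1)]
          linarith [exp_one_gt_d9]
  have h3 : z ^ 3 * exp (-(s * z)) ≤ (3 / exp 1) ^ 3 / s ^ 3 := by
    simpa only [← rpow_natCast, Nat.cast_ofNat] using
      rpow_mul_exp_neg_mul_le hs hz.1 (k := 3) (by norm_num)
  linarith

lemma two_add_three_div_exp_one_pow_le :
    2 + (3 / exp 1) ^ 3 ≤ (1 - 5 / (2 * exp 1)) ^ (-(1 / 2) : ℝ) := by
  have he₁ := exp_one_gt_d9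
  have he₂ := exp_one_lt_d9
  have hcube : (3 / exp 1) ^ 3 ≤ 7 / 5 := by
    calc (3 / exp 1) ^ 3 ≤ (3 / 2.7) ^ 3 := by gcongr; linarith
      _ ≤ 7 / 5 := by norm_num
  have ht : 0 < 1 - 5 / (2 * exp 1) := by
    rw [sub_pos, div_lt_one (by positivity)]
    linarith
  have hsqrt : √(1 - 5 / (2 * exp 1)) ≤ 5 / 17 := by
    rw [sqrt_le_left (by norm_num), sub_le_iff_le_add, ← sub_le_iff_le_add',
      le_div_iff₀ (by positivity)]
    nlinarith
  rw [rpow_neg ht.le, ← sqrt_eq_rpow]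
  calc 2 + (3 / exp 1) ^ 3 ≤ (5 / 17)⁻¹ := by norm_num; linarith
    _ ≤ (√(1 - 5 / (2 * exp 1)))⁻¹ := inv_anti₀ (sqrt_pos.2 ht) hsqrt

lemma one_sub_rpow_neg_half_le {z : ℝ} (hz : z ∈ Ioo (0 : ℝ) 1) :
    (1 - z) ^ (-(1 / 2) : ℝ) ≤ 1 + z * (1 - z) ^ (-(1 / 2) : ℝ) := by
  have h : 0 < 1 - z := sub_pos.2 hz.2
  have hhalf : (1 - z) * (1 - z) ^ (-(1 / 2) : ℝ) ≤ 1 := by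
    rw [← rpow_one_add' h.le (by norm_num)]
    exact rpow_le_one h.le (by linarith [hz.1]) (by norm_num)
  linarith

lemma one_le_one_sub_rpow_neg_half {z : ℝ} (hz : z ∈ Ioo (0 : ℝ) 1) :
    1 ≤ (1 - z) ^ (-(1 / 2) : ℝ) :=
  one_le_rpow_of_pos_of_le_one_of_nonpos (by linarith [hz.2]) (by linarith [hz.1]) (by norm_num)

lemma integrableOn_one_sub_rpow_neg_half :
    IntegrableOn (fun z : ℝ => (1 - z) ^ (-(1 / 2) : ℝ)) (Ioo 0 1) := by
  have h : IntervalIntegrable (fun z : ℝ => (1 - z) ^ (-(1 / 2) : ℝ)) volume 0 1 := by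
    simpa using ((intervalIntegral.intervalIntegrable_rpow' (a := 0) (b := 1)
      (r := -(1 / 2)) (by norm_num)).comp_sub_left 1).symm
  exact ((intervalIntegrable_iff_integrableOn_Ioc_of_le zero_le_one).1 h).mono_set
    Ioo_subset_Ioc_self

lemma integral_one_sub_rpow_neg_half :
    ∫ z in Ioo (0 : ℝ) 1, (1 - z) ^ (-(1 / 2) : ℝ) = 2 := by
  rw [← integral_Ioc_eq_integral_Ioo, ← intervalIntegral.integral_of_le zero_le_one,
    intervalIntegral.integral_comp_sub_left (fun z => z ^ (-(1 / 2) : ℝ)),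
    integral_rpow (Or.inl (by norm_num))]
  norm_num

lemma integral_exp_neg_mul_Ioo {s : ℝ} (hs : 0 < s) :
    ∫ z in Ioo (0 : ℝ) 1, exp (-s * z) = (1 - exp (-s)) / s := by
  rw [← integral_Ioc_eq_integral_Ioo, ← intervalIntegral.integral_of_le zero_le_one,
    intervalIntegral.integral_comp_mul_left (fun z => exp z) (neg_ne_zero.2 hs.ne'),
    integral_exp]
  simp only [mul_one, mul_zero, exp_zero, smul_eq_mul]
  field_simp
  ring

lemma integral_sq_mul_exp_neg_mul_le {s : ℝ} (hs : 0 < s) :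
    ∫ z in Ioo (0 : ℝ) 1, z ^ 2 * exp (-(s * z)) ≤ 2 / s ^ 3 := by
  rw [← integral_Ioc_eq_integral_Ioo, ← intervalIntegral.integral_of_le zero_le_one]
  simpa using intervalIntegral_pow_mul_exp_neg_le (k := 2) zero_le_one hs

lemma inv_one_add_le_one_sub_exp_neg_div {s : ℝ} (hs : 0 < s) :
    (1 + s)⁻¹ ≤ (1 - exp (-s)) / s := by
  have h : exp (-s) * (1 + s) ≤ 1 := by
    rw [exp_neg, inv_mul_le_iff₀ (exp_pos s)]
    linarith [add_one_le_exp s]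
  rw [inv_eq_one_div, div_le_div_iff₀ (by linarith) hs]
  linarith

section Weight

variable {θ s z : ℝ}

lemma mixture_mem_Icc (hθ : 1 ≤ θ) (hz : z ∈ Ioo (0 : ℝ) 1) :
    θ + (1 - θ) * z ∈ Icc 1 θ := by
  obtain ⟨h0, h1⟩ := hz
  constructor <;> nlinarith

lemma hsW_pos (hθ : 1 ≤ θ) (hz : z ∈ Ioo (0 : ℝ) 1) : 0 < hsW θ s z := by
  have hmix : 1 ≤ θ + (1 - θ) * z := (mixture_mem_Icc hθ hz).1
  have h1z : 0 < 1 - z := sub_pos.2 hz.2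
  unfold hsW
  positivity

lemma hsW_le (hθ : 1 ≤ θ) (hz : z ∈ Ioo (0 : ℝ) 1) :
    hsW θ s z ≤ (1 - z) ^ (-(1 / 2) : ℝ) * exp (-(s * z)) := by
  have h1z : 0 < 1 - z := sub_pos.2 hz.2
  rw [hsW, mul_right_comm, ← neg_mul]
  exact mul_le_of_le_one_right (by positivity)
    (inv_le_one_of_one_le₀ (mixture_mem_Icc hθ hz).1)

lemma inv_mul_exp_le_hsW (hθ : 1 ≤ θ) (hz : z ∈ Ioo (0 : ℝ) 1) :
    θ⁻¹ * exp (-s * z) ≤ hsW θ s z := by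
  obtain ⟨hmix₁, hmixθ⟩ := mixture_mem_Icc hθ hz
  have hinv : θ⁻¹ ≤ (1 - z) ^ (-(1 / 2) : ℝ) * (θ + (1 - θ) * z)⁻¹ :=
    (inv_anti₀ (by linarith) hmixθ).trans
      (le_mul_of_one_le_left (by positivity) (one_le_one_sub_rpow_neg_half hz))
  exact mul_le_mul_of_nonneg_right hinv (exp_nonneg _)

lemma integrableOn_hsW (hθ : 1 ≤ θ) (hs : 0 ≤ s) : IntegrableOn (hsW θ s) (Ioo 0 1) := by
  refine integrableOn_one_sub_rpow_neg_half.mono' (by unfold hsW; fun_prop) ?_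
  refine (ae_restrict_iff' measurableSet_Ioo).2 (Filter.Eventually.of_forall fun z hz => ?_)
  rw [norm_of_nonneg (hsW_pos hθ hz).le]
  refine (hsW_le hθ hz).trans (mul_le_of_le_one_right (rpow_pos_of_pos (sub_pos.2 hz.2) _).le ?_)
  exact exp_le_one_iff.2 (by nlinarith [hz.1])

lemma inv_le_integral_hsW (hθ : 1 ≤ θ) (hs : 0 < s) :
    (θ * (1 + s))⁻¹ ≤ ∫ z in Ioo (0 : ℝ) 1, hsW θ s z :=
  calc (θ * (1 + s))⁻¹ ≤ θ⁻¹ * ((1 - exp (-s)) / s) := by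
        rw [mul_inv]
        gcongr
        exact inv_one_add_le_one_sub_exp_neg_div hs
    _ = ∫ z in Ioo (0 : ℝ) 1, θ⁻¹ * exp (-s * z) := by
        rw [MeasureTheory.integral_const_mul, integral_exp_neg_mul_Ioo hs]
    _ ≤ ∫ z in Ioo (0 : ℝ) 1, hsW θ s z :=
        setIntegral_mono_on ((Continuous.integrableOn_Icc (by fun_prop)).mono_set Ioo_subset_Icc_self)
          (integrableOn_hsW hθ hs.le) measurableSet_Ioo fun _ hz => inv_mul_exp_le_hsW hθ hz

lemma sq_mul_hsW_le (hθ : 1 ≤ θ) (hs : 0 < s) (hz : z ∈ Ioo (0 : ℝ) 1) :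
    z ^ 2 * hsW θ s z ≤ z ^ 2 * exp (-(s * z)) +
      (1 / s ^ ((5 : ℝ) / 2) + (3 / exp 1) ^ 3 / s ^ 3) / 2 * (1 - z) ^ (-(1 / 2) : ℝ) := by
  have h1z : 0 < 1 - z := sub_pos.2 hz.2
  calc z ^ 2 * hsW θ s z ≤ z ^ 2 * ((1 - z) ^ (-(1 / 2) : ℝ) * exp (-(s * z))) := by
        gcongr; exact hsW_le hθ hz
    _ ≤ z ^ 2 * ((1 + z * (1 - z) ^ (-(1 / 2) : ℝ)) * exp (-(s * z))) := by
        gcongr; exact one_sub_rpow_neg_half_le hz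
    _ = z ^ 2 * exp (-(s * z)) + z ^ 3 * exp (-(s * z)) * (1 - z) ^ (-(1 / 2) : ℝ) := by ring
    _ ≤ _ := by
        gcongr; exact pow_three_mul_exp_neg_mul_le hs (Ioo_subset_Icc_self hz)

lemma integral_sq_mul_hsW_le (hθ : 1 ≤ θ) (hs : 0 < s) :
    ∫ z in Ioo (0 : ℝ) 1, z ^ 2 * hsW θ s z ≤
      (2 + (3 / exp 1) ^ 3) / s ^ 3 + 1 / s ^ ((5 : ℝ) / 2) := by
  set M := (1 / s ^ ((5 : ℝ) / 2) + (3 / exp 1) ^ 3 / s ^ 3) / 2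
  have hsq : IntegrableOn (fun z => z ^ 2 * exp (-(s * z))) (Ioo 0 1) :=
    (Continuous.integrableOn_Icc (by fun_prop)).mono_set Ioo_subset_Icc_self
  have hr : IntegrableOn (fun z => M * (1 - z) ^ (-(1 / 2) : ℝ)) (Ioo 0 1) :=
    integrableOn_one_sub_rpow_neg_half.const_mul M
  calc ∫ z in Ioo (0 : ℝ) 1, z ^ 2 * hsW θ s z
      ≤ ∫ z in Ioo (0 : ℝ) 1, (z ^ 2 * exp (-(s * z)) + M * (1 - z) ^ (-(1 / 2) : ℝ)) := by
        refine integral_mono_of_nonneg ?_ (hsq.add hr) ?_ <;>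
          refine (ae_restrict_iff' measurableSet_Ioo).2 (Filter.Eventually.of_forall fun z hz => ?_)
        · exact mul_nonneg (sq_nonneg z) (hsW_pos hθ hz).le
        · exact sq_mul_hsW_le hθ hs hz
    _ = (∫ z in Ioo (0 : ℝ) 1, z ^ 2 * exp (-(s * z))) + M * 2 := by
        rw [integral_add hsq hr, MeasureTheory.integral_const_mul, integral_one_sub_rpow_neg_half]
    _ ≤ 2 / s ^ 3 + M * 2 := by gcongr; exact integral_sq_mul_exp_neg_mul_le hs
    _ = _ := by ring

end Weight

theorem stmt4 (θ s : ℝ) (hθ : 1 ≤ θ) (hs : 1 ≤ s) :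
    hsE θ s 2 ≤ θ * (1 + s) *
      ((1 - 5 / (2 * Real.exp 1)) ^ (-(1/2) : ℝ) / s ^ 3
        + (16 / 15) / s ^ ((5 : ℝ) / 2)) := by
  have hs₀ : 0 < s := by linarith
  have hN : 0 ≤ ∫ z in Ioo (0 : ℝ) 1, z ^ 2 * hsW θ s z :=
    setIntegral_nonneg measurableSet_Ioo fun z hz => mul_nonneg (sq_nonneg z) (hsW_pos hθ hz).le
  calc hsE θ s 2 ≤ (∫ z in Ioo (0 : ℝ) 1, z ^ 2 * hsW θ s z) / (θ * (1 + s))⁻¹ :=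
        div_le_div_of_nonneg_left hN (by positivity) (inv_le_integral_hsW hθ hs₀)
    _ = θ * (1 + s) * ∫ z in Ioo (0 : ℝ) 1, z ^ 2 * hsW θ s z := by rw [div_inv_eq_mul, mul_comm]
    _ ≤ θ * (1 + s) * ((2 + (3 / exp 1) ^ 3) / s ^ 3 + 1 / s ^ ((5 : ℝ) / 2)) := by
        gcongr; exact integral_sq_mul_hsW_le hθ hs₀
    _ ≤ _ := by
        gcongr
        · exact two_add_three_div_exp_one_pow_le
        · norm_num
end

section
/- Let Z have density on (0,1) proportional to (1−z)^{-1/2}{θ+(1−θ)z}^{-1} e^{-z} (i.e., s = 1) with θ ≥ 1. Then E[Z²] ≤ θ·I₂/I₀ and E[Z] ≥ θ^{-1}·I₁/I₀, where I₀ = ∫₀¹(1−z)^{-1/2}e^{-z}dz, I₁ = ∫₀¹ z(1−z)^{-1/2}e^{-z}dz, I₂ = ∫₀¹ z²(1−z)^{-1/2}e^{-z}dz. Consequently, at θ = 1, SURE(1,1) = 2σ²[1 − E(Z) + 2E(Z²) − (E(Z))²] ≤ 2σ²[1 − I₁/I₀ + 2I₂/I₀ − (I₁/I₀)²] < 2σ².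 -/
open MeasureTheory Set

/-- I_k = ∫₀¹ z^k (1-z)^{-1/2} e^{-z} dz. -/
noncomputable def Ik (k : ℕ) : ℝ :=
  ∫ z in Ioo (0:ℝ) 1, z ^ k * (1 - z) ^ (-(1/2) : ℝ) * Real.exp (-z)

/-! On `(0, 1)` the factor `(θ + (1 - θ) z)⁻¹` lies between `θ⁻¹` and `1`, so each moment
`∫ z^k hsW θ 1` is squeezed between `θ⁻¹ I_k` and `I_k`, which gives both ratio bounds; at `θ = 1`
the weight is exactly the one defining `I_k`. For the strict inequality, the Taylor expansion of
`e^{-z}` to order six turns each `I_k` into a combination of the Beta moments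
`∫ z^n (1 - z)^{-1/2} = ∑ⱼ C(n, j) (-1)^j / (j + 1/2)` up to an explicit error, and the resulting
rational enclosures of `I₀, I₁, I₂` verify `2 I₂/I₀ < I₁/I₀ + (I₁/I₀)²`. -/

lemma integrableOn_one_sub_rpow_Ioo {r : ℝ} (hr : -1 < r) :
    IntegrableOn (fun z : ℝ => (1 - z) ^ r) (Ioo 0 1) := by
  have h := (intervalIntegral.intervalIntegrable_rpow' (a := 0) (b := 1) hr).comp_sub_left 1
  rw [sub_zero, sub_self] at h
  exact (intervalIntegrable_iff_integrableOn_Ioo_of_le zero_le_one).mp h.symm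

lemma ContinuousOn.integrableOn_pow_mul_one_sub_rpow_mul {g : ℝ → ℝ} {r : ℝ} (hr : -1 < r)
    (hg : ContinuousOn g (Icc 0 1)) (k : ℕ) :
    IntegrableOn (fun z => z ^ k * (1 - z) ^ r * g z) (Ioo 0 1) := by
  have hkg : ContinuousOn (fun z => z ^ k * g z) (Icc 0 1) := (continuousOn_pow k).mul hg
  exact ((integrableOn_one_sub_rpow_Ioo hr).continuousOn_mul_of_subset hkg isCompact_Icc
    measurableSet_Ioo Ioo_subset_Icc_self).congr_fun (fun z _ => by ring) measurableSet_Ioo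

noncomputable def betaMoment (r : ℝ) (n : ℕ) : ℝ := ∫ z in Ioo (0:ℝ) 1, z ^ n * (1 - z) ^ r

lemma betaMoment_eq_sum {r : ℝ} (hr : -1 < r) (n : ℕ) :
    betaMoment r n = ∑ k ∈ Finset.range (n + 1), (n.choose k : ℝ) * (-1) ^ k / (k + r + 1) := by
  have hsubst : betaMoment r n = ∫ u in (0:ℝ)..1, (1 - u) ^ n * u ^ r := by
    rw [betaMoment, ← integral_Ioc_eq_integral_Ioo, ← intervalIntegral.integral_of_le zero_le_one]
    simpa [sub_sub_cancel] using
      (intervalIntegral.integral_comp_sub_left (fun u => (1 - u) ^ n * u ^ r) (1:ℝ)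
        (a := 0) (b := 1))
  have hexpand : ∀ u ∈ uIoc (0:ℝ) 1, (1 - u) ^ n * u ^ r
      = ∑ k ∈ Finset.range (n + 1), (n.choose k : ℝ) * (-1) ^ k * u ^ ((k:ℝ) + r) := by
    intro u hu
    rw [uIoc_of_le zero_le_one] at hu
    rw [sub_eq_add_neg, add_comm, add_pow, Finset.sum_mul]
    refine Finset.sum_congr rfl fun k _ => ?_
    rw [Real.rpow_add hu.1, Real.rpow_natCast, neg_pow, one_pow, mul_one]
    ring
  have hrk : ∀ k : ℕ, -1 < (k:ℝ) + r := fun k => by linarith [k.cast_nonneg (α := ℝ)]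
  rw [hsubst, intervalIntegral.integral_congr_ae (Filter.Eventually.of_forall hexpand),
    intervalIntegral.integral_finsetSum fun k _ =>
      (intervalIntegral.intervalIntegrable_rpow' (hrk k)).const_mul _]
  refine Finset.sum_congr rfl fun k _ => ?_
  rw [intervalIntegral.integral_const_mul, integral_rpow (Or.inl (hrk k)), Real.one_rpow,
    Real.zero_rpow (by linarith [hrk k])]
  ring

lemma abs_exp_neg_sub_taylor_le {z : ℝ} (h0 : 0 ≤ z) (h1 : z ≤ 1) {n : ℕ} (hn : 0 < n) :
    |Real.exp (-z) - ∑ i ∈ Finset.range n, (-1) ^ i / i.factorial * z ^ i|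
      ≤ (n + 1) / (n.factorial * n) * z ^ n := by
  have h := Real.exp_bound (x := -z) (by rwa [abs_neg, abs_of_nonneg h0]) hn
  rw [abs_neg, abs_of_nonneg h0] at h
  calc _ = |Real.exp (-z) - ∑ i ∈ Finset.range n, (-z) ^ i / i.factorial| := by
        congr 2
        exact Finset.sum_congr rfl fun i _ => by rw [neg_pow]; ring
    _ ≤ _ := h
    _ = _ := by push_cast; ring

lemma ContinuousOn.integrableOn_pow_mul_one_sub_rpow_neg_half_mul {g : ℝ → ℝ}
    (hg : ContinuousOn g (Icc 0 1)) (k : ℕ) :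
    IntegrableOn (fun z => z ^ k * (1 - z) ^ (-(1/2) : ℝ) * g z) (Ioo 0 1) :=
  hg.integrableOn_pow_mul_one_sub_rpow_mul (by norm_num) k

lemma integrableOn_Ik_integrand (k : ℕ) :
    IntegrableOn (fun z : ℝ => z ^ k * (1 - z) ^ (-(1/2) : ℝ) * Real.exp (-z)) (Ioo 0 1) :=
  (by fun_prop : ContinuousOn (fun z : ℝ => Real.exp (-z)) (Icc 0 1)
    ).integrableOn_pow_mul_one_sub_rpow_neg_half_mul k

lemma Ik_nonneg (k : ℕ) : 0 ≤ Ik k :=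
  setIntegral_nonneg measurableSet_Ioo fun z hz =>
    mul_nonneg (mul_nonneg (pow_nonneg hz.1.le k) (Real.rpow_nonneg (by linarith [hz.2]) _))
      (Real.exp_pos _).le

lemma abs_Ik_sub_taylor_le (k : ℕ) {n : ℕ} (hn : 0 < n) :
    |Ik k - ∑ i ∈ Finset.range n, (-1) ^ i / i.factorial * betaMoment (-(1/2)) (k + i)|
      ≤ (n + 1) / (n.factorial * n) * betaMoment (-(1/2)) (k + n) := by
  set T : ℝ → ℝ := fun z => ∑ i ∈ Finset.range n, (-1) ^ i / i.factorial * z ^ i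
  have hint {g : ℝ → ℝ} (hg : ContinuousOn g (Icc 0 1)) :=
    hg.integrableOn_pow_mul_one_sub_rpow_neg_half_mul k
  have hsum : ∑ i ∈ Finset.range n, (-1) ^ i / i.factorial * betaMoment (-(1/2)) (k + i)
      = ∫ z in Ioo (0:ℝ) 1, z ^ k * (1 - z) ^ (-(1/2) : ℝ) * T z := by
    rw [setIntegral_congr_fun measurableSet_Ioo fun z _ => (Finset.mul_sum _ _ _),
      integral_finsetSum _ fun i _ => hint (by fun_prop)]
    refine Finset.sum_congr rfl fun i _ => ?_
    rw [betaMoment, ← integral_const_mul]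
    exact setIntegral_congr_fun measurableSet_Ioo fun z _ => by ring
  rw [hsum, Ik, ← integral_sub (integrableOn_Ik_integrand k) (hint (by fun_prop)), betaMoment,
    ← integral_const_mul, ← Real.norm_eq_abs]
  refine norm_integral_le_of_norm_le ?_ ?_
  · exact (hint (g := fun z => (n + 1) / (n.factorial * n) * z ^ n) (by fun_prop)).congr_fun
      (fun z _ => by ring) measurableSet_Ioo
  rw [ae_restrict_iff' measurableSet_Ioo]
  refine Filter.Eventually.of_forall fun z hz => ?_
  have hw : 0 ≤ z ^ k * (1 - z) ^ (-(1/2) : ℝ) :=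
    mul_nonneg (pow_nonneg hz.1.le k) (Real.rpow_nonneg (by linarith [hz.2]) _)
  rw [Real.norm_eq_abs, ← mul_sub, abs_mul, abs_of_nonneg hw]
  calc z ^ k * (1 - z) ^ (-(1/2) : ℝ) * |Real.exp (-z) - T z|
      ≤ z ^ k * (1 - z) ^ (-(1/2) : ℝ) * ((n + 1) / (n.factorial * n) * z ^ n) :=
        mul_le_mul_of_nonneg_left (abs_exp_neg_sub_taylor_le hz.1.le hz.2.le hn) hw
    _ = _ := by ring

lemma Ik_numeric_bounds :
    435494 / 405405 ≤ Ik 0 ∧ Ik 0 ≤ 87278 / 81081 ∧ 3724228 / 6081075 ≤ Ik 1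
      ∧ Ik 2 ≤ 9504112 / 20675655 := by
  have h (k : ℕ) := abs_le.mp (abs_Ik_sub_taylor_le k (n := 6) (by norm_num))
  obtain ⟨⟨h0l, h0u⟩, ⟨h1l, -⟩, ⟨-, h2u⟩⟩ := And.intro (h 0) (And.intro (h 1) (h 2))
  simp only [betaMoment_eq_sum (by norm_num : (-1:ℝ) < -(1/2)), Finset.sum_range_succ,
    Finset.sum_range_zero] at h0l h0u h1l h2u
  norm_num [Nat.choose, Nat.factorial] at h0l h0u h1l h2u
  exact ⟨by linarith, by linarith, by linarith, by linarith⟩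

lemma two_mul_Ik_two_div_lt : 2 * (Ik 2 / Ik 0) < Ik 1 / Ik 0 + (Ik 1 / Ik 0) ^ 2 := by
  obtain ⟨h0l, h0u, h1l, h2u⟩ := Ik_numeric_bounds
  have hr1 : (3724228 / 6081075) / (87278 / 81081) ≤ Ik 1 / Ik 0 :=
    div_le_div₀ (by linarith) h1l (by linarith) h0u
  have hr2 : Ik 2 / Ik 0 ≤ (9504112 / 20675655) / (435494 / 405405) :=
    div_le_div₀ (by norm_num) h2u (by norm_num) h0l
  nlinarith

lemma one_le_add_one_sub_mul {θ z : ℝ} (hθ : 1 ≤ θ) (h1 : z ≤ 1) :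
    1 ≤ θ + (1 - θ) * z := by
  nlinarith

lemma inv_add_one_sub_mul_mem_Icc {θ z : ℝ} (hθ : 1 ≤ θ) (h0 : 0 ≤ z) (h1 : z ≤ 1) :
    (θ + (1 - θ) * z)⁻¹ ∈ Icc θ⁻¹ 1 :=
  ⟨inv_anti₀ (by linarith [one_le_add_one_sub_mul hθ h1]) (by nlinarith),
    inv_le_one_of_one_le₀ (one_le_add_one_sub_mul hθ h1)⟩

lemma integrableOn_pow_mul_hsW {θ : ℝ} (hθ : 1 ≤ θ) (k : ℕ) :
    IntegrableOn (fun z => z ^ k * hsW θ 1 z) (Ioo 0 1) := by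
  have hg : ContinuousOn (fun z : ℝ => (θ + (1 - θ) * z)⁻¹ * Real.exp (-1 * z)) (Icc 0 1) :=
    ContinuousOn.mul (ContinuousOn.inv₀ (by fun_prop) fun z hz => by
      linarith [one_le_add_one_sub_mul hθ hz.2]) (by fun_prop)
  exact (hg.integrableOn_pow_mul_one_sub_rpow_neg_half_mul k).congr_fun
    (fun z _ => by rw [hsW]; ring) measurableSet_Ioo

lemma setIntegral_pow_mul_hsW_mem_Icc {θ : ℝ} (hθ : 1 ≤ θ) (k : ℕ) :
    ∫ z in Ioo (0:ℝ) 1, z ^ k * hsW θ 1 z ∈ Icc (θ⁻¹ * Ik k) (Ik k) := by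
  have hw {z : ℝ} (hz : z ∈ Ioo (0:ℝ) 1) : 0 ≤ z ^ k * (1 - z) ^ (-(1/2) : ℝ) * Real.exp (-z) :=
    mul_nonneg (mul_nonneg (pow_nonneg hz.1.le k) (Real.rpow_nonneg (by linarith [hz.2]) _))
      (Real.exp_pos _).le
  have hW {z : ℝ} : z ^ k * hsW θ 1 z
      = (θ + (1 - θ) * z)⁻¹ * (z ^ k * (1 - z) ^ (-(1/2) : ℝ) * Real.exp (-z)) := by
    rw [hsW, neg_one_mul]; ring
  have hIk := integrableOn_Ik_integrand k
  refine ⟨?_, ?_⟩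
  · rw [Ik, ← integral_const_mul]
    refine setIntegral_mono_on (hIk.const_mul _) (integrableOn_pow_mul_hsW hθ k)
      measurableSet_Ioo fun z hz => ?_
    rw [hW]
    exact mul_le_mul_of_nonneg_right (inv_add_one_sub_mul_mem_Icc hθ hz.1.le hz.2.le).1 (hw hz)
  · refine setIntegral_mono_on (integrableOn_pow_mul_hsW hθ k) hIk
      measurableSet_Ioo fun z hz => ?_
    rw [hW]
    exact mul_le_of_le_one_left (hw hz) (inv_add_one_sub_mul_mem_Icc hθ hz.1.le hz.2.le).2

lemma hsE_one_one (k : ℕ) : hsE 1 1 k = Ik k / Ik 0 := by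
  have h (m : ℕ) : ∫ z in Ioo (0:ℝ) 1, z ^ m * hsW 1 1 z = Ik m := by
    refine setIntegral_congr_fun measurableSet_Ioo fun z _ => ?_
    simp only [hsW, sub_self, zero_mul, add_zero, inv_one, mul_one, neg_one_mul]
    ring
  rw [hsE, h, ← h 0]
  simp only [pow_zero, one_mul]

theorem stmt17 (σ θ : ℝ) (hσ : 0 < σ) (hθ : 1 ≤ θ) :
    hsE θ 1 2 ≤ θ * (Ik 2 / Ik 0)
    ∧ θ⁻¹ * (Ik 1 / Ik 0) ≤ hsE θ 1 1
    ∧ 2 * σ ^ 2 * (1 - hsE 1 1 1 + 2 * hsE 1 1 2 - (hsE 1 1 1) ^ 2)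
        ≤ 2 * σ ^ 2 * (1 - Ik 1 / Ik 0 + 2 * (Ik 2 / Ik 0) - (Ik 1 / Ik 0) ^ 2)
    ∧ 2 * σ ^ 2 * (1 - Ik 1 / Ik 0 + 2 * (Ik 2 / Ik 0) - (Ik 1 / Ik 0) ^ 2)
        < 2 * σ ^ 2 := by
  have hI0 : 0 < Ik 0 := lt_of_lt_of_le (by norm_num) Ik_numeric_bounds.1
  have hθ0 : 0 < θ := by linarith
  obtain ⟨hD_ge, hD_le⟩ := setIntegral_pow_mul_hsW_mem_Icc hθ 0
  simp only [pow_zero, one_mul] at hD_ge hD_le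
  obtain ⟨hN1, -⟩ := setIntegral_pow_mul_hsW_mem_Icc hθ 1
  obtain ⟨-, hN2⟩ := setIntegral_pow_mul_hsW_mem_Icc hθ 2
  refine ⟨?_, ?_, ?_, ?_⟩
  · calc hsE θ 1 2 ≤ Ik 2 / (θ⁻¹ * Ik 0) :=
          div_le_div₀ (Ik_nonneg 2) hN2 (by positivity) hD_ge
      _ = θ * (Ik 2 / Ik 0) := by field_simp
  · calc θ⁻¹ * (Ik 1 / Ik 0) = θ⁻¹ * Ik 1 / Ik 0 := (mul_div_assoc _ _ _).symm
      _ ≤ hsE θ 1 1 :=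
          div_le_div₀ ((mul_nonneg (inv_nonneg.2 hθ0.le) (Ik_nonneg 1)).trans hN1) hN1
            ((mul_pos (inv_pos.2 hθ0) hI0).trans_le hD_ge) hD_le
  · rw [hsE_one_one, hsE_one_one]
  · exact mul_lt_of_lt_one_right (by positivity) (by linarith [two_mul_Ik_two_div_lt])
end
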